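/- Let D_n be a sequence in (0, D_max) with D_n → 0, and for each n let Q_n be a probability mass function on Â and λ_n < 0 a real with Λ'_{P,Q_n}(λ_n) = D_n. Then λ_n → −∞ as n → ∞. (In other words, the conjugate slope λ* in the variational representation of R(D) tends to −∞ as D → 0.) -/

import Mathlib

/-!
Differentiating under the integral, `Λ'_{P,Q}(λ)` is the `P`-average of the mean of `ρ(x, ·)`
under the tilted law `Q_j e^{λ ρ(x,a_j)} / Σ_i Q_i e^{λ ρ(x,a_i)}`. For `λ ≤ 0` the tilting
weights lie in `[e^{λM}, 1]`, so `Λ'(λ) ≥ e^{λM} Σ_j Q_j E_P[ρ(X,a_j)] ≥ e^{λM} D_max`.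
Hence `λ_n ≤ log (D_n / D_max) / M → -∞`.
-/

open Real MeasureTheory Finset
open scoped Classical

/-- `Q` is a probability mass function on `Fin k`. -/
def IsPmf {k : ℕ} (Q : Fin k → ℝ) : Prop := (∀ j, 0 ≤ Q j) ∧ ∑ j, Q j = 1

/-- `Λ_{P,Q}(λ) = E_P[ln Σ_j Q_j e^{λ ρ(X,a_j)}]`. -/
noncomputable def Lam {k : ℕ} (P : Measure ℝ) (ρ : ℝ → Fin k → ℝ)
    (Q : Fin k → ℝ) (l : ℝ) : ℝ :=
  ∫ x, Real.log (∑ j, Q j * Real.exp (l * ρ x j)) ∂P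

/-- The cost `∫ Σ_j W(x)({a_j}) log₂ (W(x)({a_j}) / Q_j) dP(x)` of a Markov kernel,
with the conventions `0 · log 0 = 0` (automatic in Lean) and value `⊤` if on a set of
positive `P`-measure `w x j > 0` for some `j` with `Q j = 0`. -/
noncomputable def wCost {k : ℕ} (P : Measure ℝ) (Q : Fin k → ℝ)
    (w : ℝ → Fin k → ℝ) : EReal :=
  if ∀ᵐ x ∂P, ∀ j, 0 < w x j → 0 < Q j then
    ((∫ x, ∑ j, w x j * Real.logb 2 (w x j / Q j) ∂P : ℝ) : EReal)
  else ⊤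

/-- `R(P,Q,D)`: infimum over Markov kernels `w` from `ℝ` to `Fin k` with
`∫ Σ_j w x j ρ(x,a_j) dP ≤ D` of the relative-entropy cost. -/
noncomputable def RPQ {k : ℕ} (P : Measure ℝ) (ρ : ℝ → Fin k → ℝ)
    (Q : Fin k → ℝ) (D : ℝ) : EReal :=
  ⨅ w ∈ {w : ℝ → Fin k → ℝ | Measurable w ∧ (∀ x j, 0 ≤ w x j) ∧
      (∀ x, ∑ j, w x j = 1) ∧ ∫ x, ∑ j, w x j * ρ x j ∂P ≤ D}, wCost P Q w

/-- The rate-distortion function `R(D) = inf_Q R(P,Q,D)`. -/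
noncomputable def RofD {k : ℕ} (P : Measure ℝ) (ρ : ℝ → Fin k → ℝ) (D : ℝ) : EReal :=
  ⨅ Q ∈ {Q : Fin k → ℝ | IsPmf Q}, RPQ P ρ Q D

/-- `D_max = min_j E_P[ρ(X,a_j)]`. -/
noncomputable def Dmax {k : ℕ} (P : Measure ℝ) (ρ : ℝ → Fin k → ℝ) : ℝ :=
  sInf (Set.range fun j => ∫ x, ρ x j ∂P)

/-- `D_min^{P,Q} = E_P[min_{a ∈ supp Q} ρ(X,a)]`. -/
noncomputable def DminPQ {k : ℕ} (P : Measure ℝ) (ρ : ℝ → Fin k → ℝ)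
    (Q : Fin k → ℝ) : ℝ :=
  ∫ x, (⨅ j : {j : Fin k // 0 < Q j}, ρ x (j : Fin k)) ∂P

/-- `D_max^{P,Q} = Σ_j Q_j · E_P[ρ(X,a_j)]`. -/
noncomputable def DmaxPQ {k : ℕ} (P : Measure ℝ) (ρ : ℝ → Fin k → ℝ)
    (Q : Fin k → ℝ) : ℝ :=
  ∑ j, Q j * ∫ x, ρ x j ∂P

/-- The Fenchel–Legendre transform `Λ*_{P,Q}(D) = sup_{λ ≤ 0} [λ·D − Λ_{P,Q}(λ)]`. -/
noncomputable def LamStar {k : ℕ} (P : Measure ℝ) (ρ : ℝ → Fin k → ℝ)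
    (Q : Fin k → ℝ) (D : ℝ) : EReal :=
  ⨆ l ∈ Set.Iic (0 : ℝ), ((l * D - Lam P ρ Q l : ℝ) : EReal)

namespace IsPmf

variable {k : ℕ} {Q : Fin k → ℝ}

theorem sum_mul_le (hQ : IsPmf Q) {f : Fin k → ℝ} {b : ℝ} (hf : ∀ j, f j ≤ b) :
    ∑ j, Q j * f j ≤ b :=
  calc ∑ j, Q j * f j ≤ ∑ j, Q j * b := by gcongr with j; exacts [hQ.1 j, hf j]
    _ = b := by rw [← Finset.sum_mul, hQ.2, one_mul]

theorem le_sum_mul (hQ : IsPmf Q) {f : Fin k → ℝ} {a : ℝ} (hf : ∀ j, a ≤ f j) :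
    a ≤ ∑ j, Q j * f j :=
  calc a = ∑ j, Q j * a := by rw [← Finset.sum_mul, hQ.2, one_mul]
    _ ≤ ∑ j, Q j * f j := by gcongr with j; exacts [hQ.1 j, hf j]

end IsPmf

section Tilting

variable {k : ℕ} {Q : Fin k → ℝ} {r : Fin k → ℝ} {M : ℝ}

noncomputable def pmfMgf (Q r : Fin k → ℝ) (t : ℝ) : ℝ := ∑ j, Q j * exp (t * r j)

/-- The mean of `r` under the exponentially tilted law `Q_j e^{t r_j} / pmfMgf Q r t`. -/
noncomputable def tiltedMean (Q r : Fin k → ℝ) (t : ℝ) : ℝ :=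
  (∑ j, Q j * (r j * exp (t * r j))) / pmfMgf Q r t

theorem pmfMgf_pos (hQ : IsPmf Q) (t : ℝ) : 0 < pmfMgf Q r t := by
  obtain ⟨j, hj⟩ : ∃ j, Q j ≠ 0 := by
    by_contra! h
    simpa [h] using hQ.2
  exact Finset.sum_pos' (fun i _ => mul_nonneg (hQ.1 i) (exp_pos _).le)
    ⟨j, Finset.mem_univ _, mul_pos ((hQ.1 j).lt_of_ne' hj) (exp_pos _)⟩

theorem hasDerivAt_log_pmfMgf (hQ : IsPmf Q) (t : ℝ) :
    HasDerivAt (fun t => log (pmfMgf Q r t)) (tiltedMean Q r t) t := by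
  have hMgf : HasDerivAt (pmfMgf Q r) (∑ j, Q j * (r j * exp (t * r j))) t :=
    HasDerivAt.fun_sum fun j _ =>
      (((hasDerivAt_mul_const (r j)).exp).const_mul (Q j)).congr_deriv (by ring)
  exact hMgf.log (pmfMgf_pos hQ t).ne'

theorem abs_log_pmfMgf_le (hQ : IsPmf Q) (hr : ∀ j, r j ∈ Set.Icc 0 M) (t : ℝ) :
    |log (pmfMgf Q r t)| ≤ |t| * M := by
  have hbound : ∀ j, |t * r j| ≤ |t| * M := fun j => by
    rw [abs_mul, abs_of_nonneg (hr j).1]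
    exact mul_le_mul_of_nonneg_left (hr j).2 (abs_nonneg t)
  have hlo : exp (-(|t| * M)) ≤ pmfMgf Q r t :=
    hQ.le_sum_mul fun j => exp_le_exp.2 (neg_le_of_abs_le (hbound j))
  have hhi : pmfMgf Q r t ≤ exp (|t| * M) :=
    hQ.sum_mul_le fun j => exp_le_exp.2 (le_of_abs_le (hbound j))
  rw [abs_le]
  constructor
  · exact (le_log_iff_exp_le (pmfMgf_pos hQ t)).2 hlo
  · exact (log_le_iff_le_exp (pmfMgf_pos hQ t)).2 hhi

theorem tiltedMean_mem_Icc (hQ : IsPmf Q) (hr : ∀ j, r j ∈ Set.Icc 0 M) (t : ℝ) :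
    tiltedMean Q r t ∈ Set.Icc 0 M := by
  have hZ := pmfMgf_pos (r := r) hQ t
  constructor
  · exact div_nonneg (Finset.sum_nonneg fun j _ =>
      mul_nonneg (hQ.1 j) (mul_nonneg (hr j).1 (exp_pos _).le)) hZ.le
  · rw [tiltedMean, div_le_iff₀ hZ, pmfMgf, Finset.mul_sum]
    refine Finset.sum_le_sum fun j _ => ?_
    calc Q j * (r j * exp (t * r j)) ≤ Q j * (M * exp (t * r j)) := by
          gcongr
          exacts [hQ.1 j, (hr j).2]
      _ = M * (Q j * exp (t * r j)) := by ring

/-- For `t ≤ 0` the tilting weights `e^{t r_j}` lie in `[e^{tM}, 1]`. -/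
theorem exp_mul_le_tiltedMean (hQ : IsPmf Q) (hr : ∀ j, r j ∈ Set.Icc 0 M) {t : ℝ}
    (ht : t ≤ 0) : exp (t * M) * ∑ j, Q j * r j ≤ tiltedMean Q r t := by
  have hZ := pmfMgf_pos (r := r) hQ t
  have hZ_le : pmfMgf Q r t ≤ 1 :=
    hQ.sum_mul_le fun j => exp_le_one_iff.2 (mul_nonpos_of_nonpos_of_nonneg ht (hr j).1)
  have hnum : exp (t * M) * ∑ j, Q j * r j ≤ ∑ j, Q j * (r j * exp (t * r j)) := by
    rw [Finset.mul_sum]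
    refine Finset.sum_le_sum fun j _ => ?_
    calc exp (t * M) * (Q j * r j) ≤ exp (t * r j) * (Q j * r j) :=
          mul_le_mul_of_nonneg_right (exp_le_exp.2 (mul_le_mul_of_nonpos_left (hr j).2 ht))
            (mul_nonneg (hQ.1 j) (hr j).1)
      _ = Q j * (r j * exp (t * r j)) := by ring
  exact hnum.trans (le_div_self (Finset.sum_nonneg fun j _ =>
    mul_nonneg (hQ.1 j) (mul_nonneg (hr j).1 (exp_pos _).le)) hZ hZ_le)

end Tilting

section Integrated

variable {k : ℕ} {P : Measure ℝ} {ρ : ℝ → Fin k → ℝ} {Q : Fin k → ℝ} {M : ℝ}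

theorem measurable_tiltedMean (hρ : ∀ j, Measurable fun x => ρ x j) (t : ℝ) :
    Measurable fun x => tiltedMean Q (ρ x) t := by
  unfold tiltedMean pmfMgf
  fun_prop

theorem hasDerivAt_Lam [IsFiniteMeasure P] (hρ : ∀ j, Measurable fun x => ρ x j)
    (hbd : ∀ᵐ x ∂P, ∀ j, ρ x j ∈ Set.Icc 0 M) (hQ : IsPmf Q) (l : ℝ) :
    HasDerivAt (Lam P ρ Q) (∫ x, tiltedMean Q (ρ x) l ∂P) l := by
  have hmeas : ∀ t, Measurable fun x => log (pmfMgf Q (ρ x) t) := fun t => by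
    unfold pmfMgf
    fun_prop
  have hint : Integrable (fun x => log (pmfMgf Q (ρ x) l)) P :=
    Integrable.of_bound (hmeas l).aestronglyMeasurable (|l| * M)
      (hbd.mono fun x hx => abs_log_pmfMgf_le hQ hx l)
  have hlip : ∀ᵐ x ∂P, LipschitzOnWith (nnabs M) (fun t => log (pmfMgf Q (ρ x) t)) Set.univ :=
    hbd.mono fun x hx => (lipschitzWith_of_nnnorm_deriv_le
      (fun t => (hasDerivAt_log_pmfMgf hQ t).differentiableAt) fun t => by
        rw [(hasDerivAt_log_pmfMgf hQ t).deriv, ← NNReal.coe_le_coe, coe_nnnorm, coe_nnabs,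
          norm_eq_abs, abs_of_nonneg (tiltedMean_mem_Icc hQ hx t).1]
        exact (tiltedMean_mem_Icc hQ hx t).2.trans (le_abs_self M)).lipschitzOnWith
  exact (hasDerivAt_integral_of_dominated_loc_of_lip Filter.univ_mem
    (Filter.Eventually.of_forall fun t => (hmeas t).aestronglyMeasurable) hint
    (measurable_tiltedMean hρ l).aestronglyMeasurable hlip (integrable_const M)
    (Filter.Eventually.of_forall fun x => hasDerivAt_log_pmfMgf hQ l)).2

theorem Dmax_le_DmaxPQ (hQ : IsPmf Q) : Dmax P ρ ≤ DmaxPQ P ρ Q :=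
  hQ.le_sum_mul fun j => csInf_le (Set.finite_range _).bddBelow ⟨j, rfl⟩

theorem exp_mul_Dmax_le_of_hasDerivAt_Lam [IsFiniteMeasure P]
    (hρ : ∀ j, Measurable fun x => ρ x j) (hbd : ∀ᵐ x ∂P, ∀ j, ρ x j ∈ Set.Icc 0 M)
    (hQ : IsPmf Q) {l D : ℝ} (hl : l ≤ 0) (hD : HasDerivAt (Lam P ρ Q) D l) :
    exp (l * M) * Dmax P ρ ≤ D := by
  have hρint : ∀ j, Integrable (fun x => ρ x j) P := fun j =>
    Integrable.of_bound (hρ j).aestronglyMeasurable M <| hbd.mono fun x hx => by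
      rw [norm_eq_abs, abs_of_nonneg (hx j).1]
      exact (hx j).2
  have hmean : Integrable (fun x => tiltedMean Q (ρ x) l) P :=
    Integrable.of_bound (measurable_tiltedMean hρ l).aestronglyMeasurable M <|
      hbd.mono fun x hx => by
        rw [norm_eq_abs, abs_of_nonneg (tiltedMean_mem_Icc hQ hx l).1]
        exact (tiltedMean_mem_Icc hQ hx l).2
  rw [hD.unique (hasDerivAt_Lam hρ hbd hQ l)]
  calc exp (l * M) * Dmax P ρ ≤ exp (l * M) * DmaxPQ P ρ Q := by
        gcongr
        exact Dmax_le_DmaxPQ hQ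
    _ = ∫ x, exp (l * M) * ∑ j, Q j * ρ x j ∂P := by
        rw [integral_const_mul, integral_finsetSum _ fun j _ => (hρint j).const_mul _]
        simp only [DmaxPQ, integral_const_mul]
    _ ≤ ∫ x, tiltedMean Q (ρ x) l ∂P :=
        integral_mono_ae ((integrable_finsetSum _ fun j _ => (hρint j).const_mul _).const_mul _)
          hmean (hbd.mono fun x hx => exp_mul_le_tiltedMean hQ hx hl)

end Integrated

theorem tendsto_atBot_of_exp_mul_le {l D : ℕ → ℝ} {c M : ℝ} (hc : 0 < c) (hM : 0 < M)
    (hD : ∀ n, 0 < D n) (hlim : Filter.Tendsto D Filter.atTop (nhds 0))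
    (h : ∀ n, exp (l n * M) * c ≤ D n) : Filter.Tendsto l Filter.atTop Filter.atBot := by
  have hle : ∀ n, l n ≤ log (D n / c) / M := fun n => by
    rw [le_div_iff₀ hM, le_log_iff_exp_le (div_pos (hD n) hc), le_div_iff₀ hc]
    exact h n
  refine Filter.tendsto_atBot_mono hle (Filter.Tendsto.atBot_div_const hM ?_)
  refine tendsto_log_nhdsGT_zero.comp (tendsto_nhdsWithin_of_tendsto_nhds_of_eventually_within _
    ?_ (Filter.Eventually.of_forall fun n => div_pos (hD n) hc))
  simpa using hlim.div_const c

theorem stmt_14_general {k : ℕ} (A : Set ℝ)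
    (P : Measure ℝ) [IsProbabilityMeasure P] (hsupp : P Aᶜ = 0)
    (M : ℝ) (ρ : ℝ → Fin k → ℝ) (hρmeas : ∀ j, Measurable fun x => ρ x j)
    (hρnn : ∀ x ∈ A, ∀ j, 0 ≤ ρ x j) (hρM : ∀ x ∈ A, ∀ j, ρ x j ≤ M)
    (hDmax : 0 < Dmax P ρ)
    (Dseq : ℕ → ℝ) (hDseq : ∀ n, Dseq n ∈ Set.Ioo 0 (Dmax P ρ))
    (hDlim : Filter.Tendsto Dseq Filter.atTop (nhds 0))
    (Qseq : ℕ → Fin k → ℝ) (hQseq : ∀ n, IsPmf (Qseq n))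
    (lseq : ℕ → ℝ) (hlneg : ∀ n, lseq n < 0)
    (hderiv : ∀ n, HasDerivAt (Lam P ρ (Qseq n)) (Dseq n) (lseq n)) :
    Filter.Tendsto lseq Filter.atTop Filter.atBot := by
  have hbd : ∀ᵐ x ∂P, ∀ j, ρ x j ∈ Set.Icc 0 M :=
    (ae_iff.2 hsupp).mono fun x hx j => ⟨hρnn x hx j, hρM x hx j⟩
  have key : ∀ n, exp (lseq n * M) * Dmax P ρ ≤ Dseq n := fun n =>
    exp_mul_Dmax_le_of_hasDerivAt_Lam hρmeas hbd (hQseq n) (hlneg n).le (hderiv n)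
  have hM : 0 < M := by
    by_contra! hM
    have : 1 ≤ exp (lseq 0 * M) := one_le_exp (mul_nonneg_of_nonpos_of_nonpos (hlneg 0).le hM)
    nlinarith [key 0, (hDseq 0).2]
  exact tendsto_atBot_of_exp_mul_le hDmax hM (fun n => (hDseq n).1) hDlim key

/-- **Equation (8).** If `D_n ∈ (0, D_max)`, `D_n → 0`, and `λ_n < 0` satisfies
`Λ'_{P,Q_n}(λ_n) = D_n` for pmfs `Q_n`, then `λ_n → −∞`. -/
theorem stmt_14 {k : ℕ} (hk : 0 < k) (A : Set ℝ) (hA : MeasurableSet A)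
    (P : Measure ℝ) [IsProbabilityMeasure P] (hsupp : P Aᶜ = 0)
    (M : ℝ) (ρ : ℝ → Fin k → ℝ) (hρmeas : ∀ j, Measurable fun x => ρ x j)
    (hρnn : ∀ x ∈ A, ∀ j, 0 ≤ ρ x j) (hρM : ∀ x ∈ A, ∀ j, ρ x j ≤ M)
    (hρmin : ∀ x ∈ A, ∃ j, ρ x j = 0)
    (hDmax : 0 < Dmax P ρ)
    (Dseq : ℕ → ℝ) (hDseq : ∀ n, Dseq n ∈ Set.Ioo 0 (Dmax P ρ))
    (hDlim : Filter.Tendsto Dseq Filter.atTop (nhds 0))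
    (Qseq : ℕ → Fin k → ℝ) (hQseq : ∀ n, IsPmf (Qseq n))
    (lseq : ℕ → ℝ) (hlneg : ∀ n, lseq n < 0)
    (hderiv : ∀ n, HasDerivAt (Lam P ρ (Qseq n)) (Dseq n) (lseq n)) :
    Filter.Tendsto lseq Filter.atTop Filter.atBot :=
  stmt_14_general A P hsupp M ρ hρmeas hρnn hρM hDmax Dseq hDseq hDlim Qseq hQseq lseq hlneg hderiv
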